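/- Fix ℓ ∈ ℤ. In the tree LPT(ℓ), the second components of all vertices are distinct: if w₁ and w₂ are binary words with w₁ ≠ w₂, and ((p₁,p₁'),(q₁,q₁'),(r₁,r₁')) = V(0·w₁) and ((p₂,p₂'),(q₂,q₂'),(r₂,r₂')) = V(0·w₂), then (q₁, q₁') ≠ (q₂, q₂'). -/
import Mathlib


/-- One generation step of the parabolic fixed point tree `PT(ℓ)`. -/
def ptStep (t : (ℤ × ℤ) × (ℤ × ℤ) × (ℤ × ℤ)) (d : Bool) : (ℤ × ℤ) × (ℤ × ℤ) × (ℤ × ℤ) :=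
  match t, d with
  | ((p, p'), (q, q'), (r, r')), false =>
      ((p, p'), (q ^ 2 * r' - q * q' * r - r, -(q' ^ 2) * r + q * q' * r' - r'), (q, q'))
  | ((p, p'), (q, q'), (r, r')), true =>
      ((q, q'), (-(q ^ 2) * p' + q * q' * p - p, q' ^ 2 * p - q * q' * p' - p'), (r, r'))

/-- The parabolic fixed point tree `PT(ℓ)`, encoded on binary words. -/
def PTtree (l : ℤ) (w : List Bool) : (ℤ × ℤ) × (ℤ × ℤ) × (ℤ × ℤ) :=
  w.foldl ptStep ((1, -l - 1), (2, -2 * l + 1), (1, -l + 2))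

/-- Cross determinant of two integer pairs. -/
def crs (u v : ℤ × ℤ) : ℤ := u.1 * v.2 - u.2 * v.1

lemma crs_self (u : ℤ × ℤ) : crs u u = 0 := by simp [crs]; ring

lemma cross_trans (u v w : ℤ × ℤ) (hu : 0 < u.1) (hv : 0 < v.1) (hw : 0 < w.1)
    (h1 : 0 < crs u v) (h2 : 0 < crs v w) : 0 < crs u w := by
  have key : crs u w * v.1 = crs u v * w.1 + crs v w * u.1 := by
    simp only [crs]; ring
  nlinarith

/-- Invariant of triples along the tree. -/
def TInv (t : (ℤ × ℤ) × (ℤ × ℤ) × (ℤ × ℤ)) : Prop :=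
  1 ≤ t.1.1 ∧ 1 ≤ t.2.1.1 ∧ 1 ≤ t.2.2.1 ∧ t.1.1 ≤ t.2.1.1 ∧ t.2.2.1 ≤ t.2.1.1 ∧
  3 ≤ crs t.1 t.2.1 ∧ 3 ≤ crs t.2.1 t.2.2 ∧ 3 ≤ crs t.1 t.2.2 ∧
  crs t.1 t.2.2 ≤ crs t.1 t.2.1 + crs t.2.1 t.2.2 - 3

lemma tinv_step (t : (ℤ × ℤ) × (ℤ × ℤ) × (ℤ × ℤ)) (d : Bool) (h : TInv t) :
    TInv (ptStep t d) := by
  obtain ⟨⟨p, p'⟩, ⟨q, q'⟩, ⟨r, r'⟩⟩ := t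
  obtain ⟨h1, h2, h3, h4, h5, ha, hb, hc, hd⟩ := h
  simp only [TInv, crs] at *
  have X1 : 0 ≤ (q - 1) * ((q*r' - q'*r) - 3) := mul_nonneg (by linarith) (by linarith)
  have X2 : 0 ≤ ((p*q' - p'*q) - 3) * ((q*r' - q'*r) - 3) :=
    mul_nonneg (by linarith) (by linarith)
  have X3 : 0 ≤ (p*q' - p'*q) * ((q*r' - q'*r) - 3) := mul_nonneg (by linarith) (by linarith)
  have X4 : 0 ≤ ((p*q' - p'*q) - 3) * (q*r' - q'*r) := mul_nonneg (by linarith) (by linarith)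
  have X5 : 0 ≤ (q - 1) * ((p*q' - p'*q) - 3) := mul_nonneg (by linarith) (by linarith)
  cases d <;> simp only [ptStep, TInv, crs] <;>
    refine ⟨by linarith, by linarith, by linarith, by linarith, by linarith,
      by linarith, by linarith, by linarith, by linarith⟩

def nodeT (t : (ℤ × ℤ) × (ℤ × ℤ) × (ℤ × ℤ)) (w : List Bool) : (ℤ × ℤ) × (ℤ × ℤ) × (ℤ × ℤ) :=
  w.foldl ptStep t

lemma nodeT_cons (t : (ℤ × ℤ) × (ℤ × ℤ) × (ℤ × ℤ)) (d : Bool) (w : List Bool) :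
    nodeT t (d :: w) = nodeT (ptStep t d) w := rfl

lemma tinv_nodeT (w : List Bool) : ∀ t, TInv t → TInv (nodeT t w) := by
  induction w with
  | nil => intro t h; exact h
  | cons d w ih => intro t h; rw [nodeT_cons]; exact ih _ (tinv_step t d h)

lemma step_false_fst (t : (ℤ × ℤ) × (ℤ × ℤ) × (ℤ × ℤ)) : (ptStep t false).1 = t.1 := by
  obtain ⟨⟨p, p'⟩, ⟨q, q'⟩, ⟨r, r'⟩⟩ := t; rfl

lemma step_false_snd (t : (ℤ × ℤ) × (ℤ × ℤ) × (ℤ × ℤ)) : (ptStep t false).2.2 = t.2.1 := by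
  obtain ⟨⟨p, p'⟩, ⟨q, q'⟩, ⟨r, r'⟩⟩ := t; rfl

lemma step_true_fst (t : (ℤ × ℤ) × (ℤ × ℤ) × (ℤ × ℤ)) : (ptStep t true).1 = t.2.1 := by
  obtain ⟨⟨p, p'⟩, ⟨q, q'⟩, ⟨r, r'⟩⟩ := t; rfl

lemma step_true_snd (t : (ℤ × ℤ) × (ℤ × ℤ) × (ℤ × ℤ)) : (ptStep t true).2.2 = t.2.2 := by
  obtain ⟨⟨p, p'⟩, ⟨q, q'⟩, ⟨r, r'⟩⟩ := t; rfl

/-- middles of strict descendants lie strictly between the neighbors in slope. -/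
lemma mid_between (w : List Bool) : ∀ t, TInv t → w ≠ [] →
    0 < crs t.1 (nodeT t w).2.1 ∧ 0 < crs (nodeT t w).2.1 t.2.2 := by
  induction w with
  | nil => intro t _ h; exact absurd rfl h
  | cons d w ih =>
    intro t h _
    rw [nodeT_cons]
    by_cases hw : w = []
    · subst hw
      obtain ⟨⟨p, p'⟩, ⟨q, q'⟩, ⟨r, r'⟩⟩ := t
      obtain ⟨h1, h2, h3, h4, h5, ha, hb, hc, hd⟩ := h
      simp only [crs] at *
      cases d <;> simp only [nodeT, List.foldl, ptStep] <;> constructor <;>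
        nlinarith [mul_nonneg (by linarith : (0:ℤ) ≤ p*q' - p'*q - 3)
            (by linarith : (0:ℤ) ≤ q*r' - q'*r),
          mul_nonneg (by linarith : (0:ℤ) ≤ p*q' - p'*q)
            (by linarith : (0:ℤ) ≤ q*r' - q'*r - 3),
          mul_nonneg (by linarith : (0:ℤ) ≤ p*q' - p'*q - 3)
            (by linarith : (0:ℤ) ≤ p*q' - p'*q - 3),
          mul_nonneg (by linarith : (0:ℤ) ≤ q*r' - q'*r - 3)
            (by linarith : (0:ℤ) ≤ q*r' - q'*r - 3)]
    · have hinv' := tinv_step t d h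
      have hIH := ih (ptStep t d) hinv' hw
      have hmid1 : (1:ℤ) ≤ (nodeT (ptStep t d) w).2.1.1 :=
        (tinv_nodeT w _ hinv').2.1
      obtain ⟨hp1, hq1, hr1, _, _, hA, hB, hC, _⟩ := h
      cases d
      · -- left child: (p, Q, q); need crs p m > 0 and crs m r > 0
        refine ⟨?_, ?_⟩
        · rw [← step_false_fst t]; exact hIH.1
        · -- crs m q > 0 (from IH and step_false_snd), crs q r > 0, transitivity
          have h2' : 0 < crs (nodeT (ptStep t false) w).2.1 t.2.1 := by
            rw [← step_false_snd t]; exact hIH.2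
          exact cross_trans _ t.2.1 t.2.2 (by linarith) (by linarith) (by linarith) h2'
            (by linarith)
      · refine ⟨?_, ?_⟩
        · have h1' : 0 < crs t.2.1 (nodeT (ptStep t true) w).2.1 := by
            rw [← step_true_fst t]; exact hIH.1
          exact cross_trans t.1 t.2.1 _ (by linarith) (by linarith) (by linarith)
            (by linarith) h1'
        · rw [← step_true_snd t]; exact hIH.2

/-- Every middle in the left subtree is slope-below the node's middle. -/
lemma left_lt (t : (ℤ × ℤ) × (ℤ × ℤ) × (ℤ × ℤ)) (h : TInv t) (w : List Bool) :
    0 < crs (nodeT (ptStep t false) w).2.1 t.2.1 := by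
  by_cases hw : w = []
  · subst hw
    obtain ⟨⟨p, p'⟩, ⟨q, q'⟩, ⟨r, r'⟩⟩ := t
    obtain ⟨h1, h2, h3, h4, h5, ha, hb, hc, hd⟩ := h
    simp only [crs, nodeT, List.foldl, ptStep] at *
    nlinarith
  · have := (mid_between w (ptStep t false) (tinv_step t false h) hw).2
    rwa [step_false_snd t] at this

/-- Every middle in the right subtree is slope-above the node's middle. -/
lemma right_gt (t : (ℤ × ℤ) × (ℤ × ℤ) × (ℤ × ℤ)) (h : TInv t) (w : List Bool) :
    0 < crs t.2.1 (nodeT (ptStep t true) w).2.1 := by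
  by_cases hw : w = []
  · subst hw
    obtain ⟨⟨p, p'⟩, ⟨q, q'⟩, ⟨r, r'⟩⟩ := t
    obtain ⟨h1, h2, h3, h4, h5, ha, hb, hc, hd⟩ := h
    simp only [crs, nodeT, List.foldl, ptStep] at *
    nlinarith
  · have := (mid_between w (ptStep t true) (tinv_step t true h) hw).1
    rwa [step_true_fst t] at this

lemma mid_fst_pos (t : (ℤ × ℤ) × (ℤ × ℤ) × (ℤ × ℤ)) (h : TInv t) (w : List Bool) :
    0 < (nodeT t w).2.1.1 := by
  have := (tinv_nodeT w t h).2.1; linarith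

lemma mid_ne (w₁ : List Bool) : ∀ (t : (ℤ × ℤ) × (ℤ × ℤ) × (ℤ × ℤ)) (w₂ : List Bool),
    TInv t → w₁ ≠ w₂ → (nodeT t w₁).2.1 ≠ (nodeT t w₂).2.1 := by
  induction w₁ with
  | nil =>
    intro t w₂ h hne
    cases w₂ with
    | nil => exact absurd rfl hne
    | cons d w₂ =>
      rw [nodeT_cons]
      intro heq
      cases d
      · have := left_lt t h w₂
        rw [← heq] at this
        simp only [nodeT, List.foldl_nil] at this
        simp [crs_self] at this
      · have := right_gt t h w₂
        rw [← heq] at this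
        simp only [nodeT, List.foldl_nil] at this
        simp [crs_self] at this
  | cons d₁ w₁ ih =>
    intro t w₂ h hne
    cases w₂ with
    | nil =>
      rw [nodeT_cons]
      intro heq
      cases d₁
      · have := left_lt t h w₁
        rw [heq] at this
        simp only [nodeT, List.foldl_nil] at this
        simp [crs_self] at this
      · have := right_gt t h w₁
        rw [heq] at this
        simp only [nodeT, List.foldl_nil] at this
        simp [crs_self] at this
    | cons d₂ w₂ =>
      rw [nodeT_cons, nodeT_cons]
      by_cases hd : d₁ = d₂
      · subst hd
        have hne' : w₁ ≠ w₂ := by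
          intro he; exact hne (by rw [he])
        exact ih (ptStep t d₁) w₂ (tinv_step t d₁ h) hne'
      · have hq1 : 0 < t.2.1.1 := by have := h.2.1; linarith
        intro heq
        cases d₁ <;> cases d₂ <;> try exact hd rfl
        · -- d₁ = false, d₂ = true
          have hl := left_lt t h w₁
          have hr := right_gt t h w₂
          have hm1 := mid_fst_pos (ptStep t false) (tinv_step t false h) w₁
          have hm2 := mid_fst_pos (ptStep t true) (tinv_step t true h) w₂
          have := cross_trans _ t.2.1 _ hm1 hq1 hm2 hl hr
          rw [heq] at this
          simp [crs_self] at this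
        · -- d₁ = true, d₂ = false
          have hl := left_lt t h w₂
          have hr := right_gt t h w₁
          have hm1 := mid_fst_pos (ptStep t false) (tinv_step t false h) w₂
          have hm2 := mid_fst_pos (ptStep t true) (tinv_step t true h) w₁
          have := cross_trans _ t.2.1 _ hm1 hq1 hm2 hl hr
          rw [← heq] at this
          simp [crs_self] at this

lemma tinv_root (l : ℤ) : TInv ((1, -l - 1), (2, -2 * l + 1), (1, -l + 2)) := by
  refine ⟨?_, ?_, ?_, ?_, ?_, ?_, ?_, ?_, ?_⟩ <;> simp [crs] <;> ring_nf <;> norm_num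

theorem stmt18 (l : ℤ) (w₁ w₂ : List Bool) (h : w₁ ≠ w₂) :
    (PTtree l (false :: w₁)).2.1 ≠ (PTtree l (false :: w₂)).2.1 := by
  have hroot := tinv_root l
  have hstep := tinv_step _ false hroot
  exact mid_ne w₁ (ptStep ((1, -l - 1), (2, -2 * l + 1), (1, -l + 2)) false) w₂ hstep h
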